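/- arXiv:2605.16302 — 2 statements merged into one kernel-verified Lean document; each statement's English description precedes it below -/
import Mathlib

section
/- Under the same exchangeable setting, Var(A'_i(λ)) = Var(A_i) + (1 − 1/G)(λ² V_φ − 2λ C), where A_i = Y_i − Ȳ, A'_i(λ) = A_i + λ(φ_i − φ̄), C = −(C_in − C_out), and V_φ = V_in − V_out. -/
open MeasureTheory ProbabilityTheory Real Finset

noncomputable def cov {Ω : Type*} [MeasurableSpace Ω] (μ : Measure Ω) (X Y : Ω → ℝ) : ℝ :=
  (∫ ω, X ω * Y ω ∂μ) - (∫ ω, X ω ∂μ) * (∫ ω, Y ω ∂μ)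

noncomputable def var {Ω : Type*} [MeasurableSpace Ω] (μ : Measure Ω) (X : Ω → ℝ) : ℝ :=
  cov μ X X

/-! Centering at the group mean multiplies every within-minus-between contrast by `1 - 1/G`:
`Cov(Xᵢ - X̄, Zᵢ - Z̄) = (1 - 1/G)(a - b)` when `Cov(Xⱼ, Zₖ)` is `a` on the diagonal and `b` off it.
Applied to `(Y, φ)` and to `(φ, φ)`, this turns the expansion
`Var(A + λB) = Var A + 2λ Cov(A, B) + λ² Var B` into the stated formula. -/

lemma Fintype.sum_eq_add_card_sub_one_mul {ι : Type*} [Fintype ι] {f : ι → ℝ} {i : ι} {a b : ℝ}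
    (hi : f i = a) (hne : ∀ j, j ≠ i → f j = b) :
    ∑ j, f j = a + ((Fintype.card ι : ℝ) - 1) * b := by
  classical
  rw [Fintype.sum_eq_add_sum_compl i, hi,
    Finset.sum_congr rfl fun j hj => hne j (by simpa using hj), sum_const, card_compl,
    card_singleton, nsmul_eq_mul, Nat.cast_sub (Fintype.card_pos_iff.mpr ⟨i⟩), Nat.cast_one]

section Covariance

variable {Ω : Type*} [MeasurableSpace Ω] {μ : Measure Ω}

lemma cov_eq_covariance [IsProbabilityMeasure μ] {X Y : Ω → ℝ} (hX : MemLp X 2 μ)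
    (hY : MemLp Y 2 μ) : cov μ X Y = cov[X, Y; μ] :=
  (covariance_eq_sub hX hY).symm

lemma var_eq_variance [IsProbabilityMeasure μ] {X : Ω → ℝ} (hX : MemLp X 2 μ) :
    var μ X = Var[X; μ] :=
  (cov_eq_covariance hX hX).trans (covariance_self hX.aemeasurable)

lemma memLp_sub_const_mul_sum {ι : Type*} [Fintype ι] {X : ι → Ω → ℝ}
    (hX : ∀ j, MemLp (X j) 2 μ) (i : ι) (c : ℝ) :
    MemLp (fun ω => X i ω - c * ∑ j, X j ω) 2 μ :=
  (hX i).sub ((memLp_finsetSum univ fun j _ => hX j).const_mul c)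

lemma covariance_sub_mean_sub_mean [IsFiniteMeasure μ] {ι : Type*} [Fintype ι]
    {X Z : ι → Ω → ℝ} (hX : ∀ j, MemLp (X j) 2 μ) (hZ : ∀ j, MemLp (Z j) 2 μ) {a b : ℝ}
    (hin : ∀ j, cov[X j, Z j; μ] = a) (hout : ∀ j k, j ≠ k → cov[X j, Z k; μ] = b) (i : ι) :
    cov[fun ω => X i ω - (1 / Fintype.card ι : ℝ) * ∑ j, X j ω,
        fun ω => Z i ω - (1 / Fintype.card ι : ℝ) * ∑ j, Z j ω; μ]
      = (1 - 1 / Fintype.card ι) * (a - b) := by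
  have : Nonempty ι := ⟨i⟩
  have hn : (Fintype.card ι : ℝ) ≠ 0 := Nat.cast_ne_zero.mpr Fintype.card_ne_zero
  have row : ∀ j, ∑ k, cov[X j, Z k; μ] = a + ((Fintype.card ι : ℝ) - 1) * b := fun j =>
    Fintype.sum_eq_add_card_sub_one_mul (hin j) fun k hk => hout j k (Ne.symm hk)
  have col : ∀ k, ∑ j, cov[X j, Z k; μ] = a + ((Fintype.card ι : ℝ) - 1) * b := fun k =>
    Fintype.sum_eq_add_card_sub_one_mul (hin k) fun j hj => hout j k hj
  rw [covariance_fun_sub_fun_sub (hX i) ((memLp_finsetSum univ fun j _ => hX j).const_mul _)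
      (hZ i) ((memLp_finsetSum univ fun j _ => hZ j).const_mul _),
    covariance_const_mul_left, covariance_const_mul_left, covariance_const_mul_right,
    covariance_const_mul_right, covariance_fun_sum_right hZ (hX i),
    covariance_fun_sum_left hX (hZ i), covariance_fun_sum_fun_sum hX hZ]
  simp only [row, col, hin, sum_const, card_univ, nsmul_eq_mul]
  field_simp
  ring

end Covariance

theorem stmt4_general {Ω : Type*} [MeasurableSpace Ω] (μ : Measure Ω) [IsProbabilityMeasure μ]
    (G : ℕ) (Y φ : Fin G → Ω → ℝ)
    (hY2 : ∀ i, MemLp (Y i) 2 μ) (hφ2 : ∀ i, MemLp (φ i) 2 μ)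
    (Cin Cout Vin Vout : ℝ)
    (hCin : ∀ i, cov μ (Y i) (φ i) = Cin)
    (hCout : ∀ i j, i ≠ j → cov μ (Y i) (φ j) = Cout)
    (hVin : ∀ i, var μ (φ i) = Vin)
    (hVout : ∀ i j, i ≠ j → cov μ (φ i) (φ j) = Vout)
    (C Vφ : ℝ) (hC : C = -(Cin - Cout)) (hVφ : Vφ = Vin - Vout)
    (i : Fin G) (l : ℝ) :
    var μ (fun ω => (Y i ω - (1 / G : ℝ) * ∑ j, Y j ω)
            + l * (φ i ω - (1 / G : ℝ) * ∑ j, φ j ω))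
      = var μ (fun ω => Y i ω - (1 / G : ℝ) * ∑ j, Y j ω)
        + (1 - 1 / G) * (l ^ 2 * Vφ - 2 * l * C) := by
  set A := fun ω => Y i ω - (1 / G : ℝ) * ∑ j, Y j ω
  set B := fun ω => φ i ω - (1 / G : ℝ) * ∑ j, φ j ω
  change var μ (fun ω => A ω + l * B ω) = var μ A + _
  have hA : MemLp A 2 μ := memLp_sub_const_mul_sum hY2 i _
  have hB : MemLp B 2 μ := memLp_sub_const_mul_sum hφ2 i _
  have hAB : cov[A, B; μ] = (1 - 1 / G) * (Cin - Cout) := by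
    simpa only [Fintype.card_fin] using covariance_sub_mean_sub_mean hY2 hφ2
      (fun j => (cov_eq_covariance (hY2 j) (hφ2 j)).symm.trans (hCin j))
      (fun j k hjk => (cov_eq_covariance (hY2 j) (hφ2 k)).symm.trans (hCout j k hjk)) i
  have hBB : cov[B, B; μ] = (1 - 1 / G) * (Vin - Vout) := by
    simpa only [Fintype.card_fin] using covariance_sub_mean_sub_mean hφ2 hφ2
      (fun j => (cov_eq_covariance (hφ2 j) (hφ2 j)).symm.trans (hVin j))
      (fun j k hjk => (cov_eq_covariance (hφ2 j) (hφ2 k)).symm.trans (hVout j k hjk)) i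
  rw [var_eq_variance (X := fun ω => A ω + l * B ω) (hA.add (hB.const_mul l)),
    var_eq_variance hA, variance_fun_add hA (hB.const_mul l), variance_const_mul,
    covariance_const_mul_right, ← covariance_self hB.aemeasurable, hAB, hBB, hC, hVφ]
  ring

theorem stmt4 {Ω : Type*} [MeasurableSpace Ω] (μ : Measure Ω) [IsProbabilityMeasure μ]
    (G : ℕ) (hG : 2 ≤ G) (Y φ : Fin G → Ω → ℝ)
    (hY2 : ∀ i, MemLp (Y i) 2 μ) (hφ2 : ∀ i, MemLp (φ i) 2 μ)
    (Cin Cout Vin Vout : ℝ)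
    (hCin : ∀ i, cov μ (Y i) (φ i) = Cin)
    (hCout : ∀ i j, i ≠ j → cov μ (Y i) (φ j) = Cout)
    (hVin : ∀ i, var μ (φ i) = Vin)
    (hVout : ∀ i j, i ≠ j → cov μ (φ i) (φ j) = Vout)
    (C Vφ : ℝ) (hC : C = -(Cin - Cout)) (hVφ : Vφ = Vin - Vout)
    (i : Fin G) (l : ℝ) :
    var μ (fun ω => (Y i ω - (1 / G : ℝ) * ∑ j, Y j ω)
            + l * (φ i ω - (1 / G : ℝ) * ∑ j, φ j ω))
      = var μ (fun ω => Y i ω - (1 / G : ℝ) * ∑ j, Y j ω)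
        + (1 - 1 / G) * (l ^ 2 * Vφ - 2 * l * C) :=
  stmt4_general μ G Y φ hY2 hφ2 Cin Cout Vin Vout hCin hCout hVin hVout C Vφ hC hVφ i l
end

section
/- Let (Y_1,φ_1),…,(Y_G,φ_G) be exchangeable square-integrable pairs, G ≥ 2, and suppose the shaping signals are target-local in the sense that Cov(Y_i, φ_j) = 0 for all j ≠ i. If each pair (Y_i,φ_i) satisfies: Y_i ∈ {-1,1}, P(Y_i = 1) ∈ (0,1), φ_i = 0 on {Y_i = 1}, and E[φ_i | Y_i = −1] > 0, and additionally Var(φ_i) > Cov(φ_i,φ_j) for j ≠ i, then there exists λ_max > 0 such that for all λ ∈ (0, λ_max), Var((Y_i + λφ_i) − (Ȳ + λφ̄)) < Var(Y_i − Ȳ). -/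
open MeasureTheory ProbabilityTheory Real Finset

section Aux

variable {Ω : Type*} [MeasurableSpace Ω] {μ : Measure Ω} [IsProbabilityMeasure μ]

lemma int_of_mem2 {X : Ω → ℝ} (h : MemLp X 2 μ) : Integrable X μ :=
  h.integrable (by norm_num)

lemma int_mul2 {X Z : Ω → ℝ} (hX : MemLp X 2 μ) (hZ : MemLp Z 2 μ) :
    Integrable (fun ω => X ω * Z ω) μ := by
  have : MemLp (X • Z) 1 μ := hZ.smul hX
  exact memLp_one_iff_integrable.mp this

lemma cov_comm (X Z : Ω → ℝ) : cov μ X Z = cov μ Z X := by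
  simp [cov, mul_comm]

lemma cov_sum_left {ι : Type*} (s : Finset ι) (c : ι → ℝ) (f : ι → Ω → ℝ) (g : Ω → ℝ)
    (hf : ∀ j, MemLp (f j) 2 μ) (hg : MemLp g 2 μ) :
    cov μ (fun ω => ∑ j ∈ s, c j * f j ω) g = ∑ j ∈ s, c j * cov μ (f j) g := by
  unfold cov
  have h1 : (∫ ω, (∑ j ∈ s, c j * f j ω) * g ω ∂μ)
      = ∑ j ∈ s, c j * ∫ ω, f j ω * g ω ∂μ := by
    have : ∀ ω, (∑ j ∈ s, c j * f j ω) * g ω = ∑ j ∈ s, c j * (f j ω * g ω) := by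
      intro ω; rw [Finset.sum_mul]; exact Finset.sum_congr rfl (fun j _ => by ring)
    simp_rw [this]
    rw [integral_finset_sum _ (fun j _ => ((int_mul2 (hf j) hg).const_mul (c j)))]
    exact Finset.sum_congr rfl (fun j _ => integral_const_mul _ _)
  have h2 : (∫ ω, (∑ j ∈ s, c j * f j ω) ∂μ) = ∑ j ∈ s, c j * ∫ ω, f j ω ∂μ := by
    rw [integral_finset_sum _ (fun j _ => ((int_of_mem2 (hf j)).const_mul (c j)))]
    exact Finset.sum_congr rfl (fun j _ => integral_const_mul _ _)
  rw [h1, h2, Finset.sum_mul, ← Finset.sum_sub_distrib]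
  exact Finset.sum_congr rfl (fun j _ => by ring)

lemma cov_sum_right {ι : Type*} (s : Finset ι) (c : ι → ℝ) (f : ι → Ω → ℝ) (g : Ω → ℝ)
    (hf : ∀ j, MemLp (f j) 2 μ) (hg : MemLp g 2 μ) :
    cov μ g (fun ω => ∑ j ∈ s, c j * f j ω) = ∑ j ∈ s, c j * cov μ g (f j) := by
  rw [cov_comm, cov_sum_left s c f g hf hg]
  exact Finset.sum_congr rfl (fun j _ => by rw [cov_comm])

lemma var_expand {X Z : Ω → ℝ} (hX : MemLp X 2 μ) (hZ : MemLp Z 2 μ) (l : ℝ) :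
    var μ (fun ω => X ω + l * Z ω)
      = var μ X + 2 * l * cov μ X Z + l ^ 2 * var μ Z := by
  unfold var cov
  have hXX := int_mul2 hX hX
  have hXZ := int_mul2 hX hZ
  have hZZ := int_mul2 hZ hZ
  have e1 : (∫ ω, (X ω + l * Z ω) * (X ω + l * Z ω) ∂μ)
      = (∫ ω, X ω * X ω ∂μ) + 2 * l * (∫ ω, X ω * Z ω ∂μ)
        + l ^ 2 * (∫ ω, Z ω * Z ω ∂μ) := by
    have : ∀ ω, (X ω + l * Z ω) * (X ω + l * Z ω)
        = X ω * X ω + (2 * l) * (X ω * Z ω) + l ^ 2 * (Z ω * Z ω) := by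
      intro ω; ring
    simp_rw [this]
    have hI3 : Integrable (fun ω => 2 * l * (X ω * Z ω)) μ := hXZ.const_mul _
    have hI2 : Integrable (fun ω => l ^ 2 * (Z ω * Z ω)) μ := hZZ.const_mul _
    have hI1 : Integrable (fun ω => X ω * X ω + 2 * l * (X ω * Z ω)) μ := hXX.add hI3
    rw [integral_add hI1 hI2, integral_add hXX hI3, integral_const_mul, integral_const_mul]
  have e2 : (∫ ω, (X ω + l * Z ω) ∂μ) = (∫ ω, X ω ∂μ) + l * (∫ ω, Z ω ∂μ) := by
    rw [integral_add (int_of_mem2 hX) ((int_of_mem2 hZ).const_mul _), integral_const_mul]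
  rw [e1, e2]; ring

end Aux

theorem stmt15 {Ω : Type*} [MeasurableSpace Ω] (μ : Measure Ω) [IsProbabilityMeasure μ]
    (G : ℕ) (hG : 2 ≤ G) (Y φ : Fin G → Ω → ℝ)
    (hYmeas : ∀ i, Measurable (Y i)) (hφmeas : ∀ i, Measurable (φ i))
    (hY2 : ∀ i, MemLp (Y i) 2 μ) (hφ2 : ∀ i, MemLp (φ i) 2 μ)
    (htargetlocal : ∀ i j, i ≠ j → cov μ (Y i) (φ j) = 0)
    (Cin Vin Vout : ℝ)
    (hCin : ∀ i, cov μ (Y i) (φ i) = Cin)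
    (hVin : ∀ i, var μ (φ i) = Vin)
    (hVout : ∀ i j, i ≠ j → cov μ (φ i) (φ j) = Vout)
    (hval : ∀ i ω, Y i ω = 1 ∨ Y i ω = -1)
    (hp : ∀ i, 0 < (μ {ω | Y i ω = 1}).toReal ∧ (μ {ω | Y i ω = 1}).toReal < 1)
    (hφzero : ∀ i ω, Y i ω = 1 → φ i ω = 0)
    (hφnn : ∀ i ω, 0 ≤ φ i ω)
    (hcond : ∀ i, 0 < ∫ ω in {ω | Y i ω = -1}, φ i ω ∂μ)
    (hVd : Vout < Vin)
    (i : Fin G) :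
    ∃ lmax : ℝ, 0 < lmax ∧ ∀ l : ℝ, 0 < l → l < lmax →
      var μ (fun ω => (Y i ω + l * φ i ω)
              - (1 / G : ℝ) * ∑ j, (Y j ω + l * φ j ω))
        < var μ (fun ω => Y i ω - (1 / G : ℝ) * ∑ j, Y j ω) := by
  have hGpos : (0:ℝ) < G := by positivity
  -- hG gives G ≥ 2 > 0
  have hGR : (0:ℝ) < (G:ℝ) := by
    have : (2:ℝ) ≤ G := by exact_mod_cast hG
    linarith
  set a : Fin G → ℝ := fun j => (if j = i then (1:ℝ) else 0) - 1 / G with ha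
  have hsum_a : ∑ j, a j = 0 := by
    simp only [ha, Finset.sum_sub_distrib, Finset.sum_ite_eq', Finset.mem_univ, if_true,
      Finset.sum_const, Finset.card_fin, nsmul_eq_mul]
    field_simp
    ring
  have hsq_a : ∑ j, (a j) ^ 2 = 1 - 1 / G := by
    have : ∀ j : Fin G, (a j) ^ 2
        = (if j = i then (1:ℝ) else 0) - 2 / G * (if j = i then (1:ℝ) else 0) + 1 / G ^ 2 := by
      intro j
      by_cases h : j = i <;> simp [ha, h] <;> ring
    simp_rw [this]
    rw [Finset.sum_add_distrib, Finset.sum_sub_distrib]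
    simp only [Finset.sum_ite_eq', Finset.mem_univ, if_true, ← Finset.mul_sum,
      Finset.sum_const, Finset.card_fin, nsmul_eq_mul, smul_eq_mul, mul_one]
    field_simp
    ring
  set A : Ω → ℝ := fun ω => ∑ j, a j * Y j ω with hA
  set B : Ω → ℝ := fun ω => ∑ j, a j * φ j ω with hB
  have hA2 : MemLp A 2 μ :=
    memLp_finset_sum Finset.univ (fun j _ => (hY2 j).const_mul (a j))
  have hB2 : MemLp B 2 μ :=
    memLp_finset_sum Finset.univ (fun j _ => (hφ2 j).const_mul (a j))
  -- pointwise identities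
  have hAeq : (fun ω => Y i ω - (1 / G : ℝ) * ∑ j, Y j ω) = A := by
    funext ω
    simp only [hA, ha, sub_mul, Finset.sum_sub_distrib, Finset.mul_sum, ite_mul, one_mul,
      zero_mul, Finset.sum_ite_eq', Finset.mem_univ, if_true]
  have hBeq : (fun ω => φ i ω - (1 / G : ℝ) * ∑ j, φ j ω) = B := by
    funext ω
    simp only [hB, ha, sub_mul, Finset.sum_sub_distrib, Finset.mul_sum, ite_mul, one_mul,
      zero_mul, Finset.sum_ite_eq', Finset.mem_univ, if_true]
  -- covariance of A and B
  have hcovAB : cov μ A B = (1 - 1 / G) * Cin := by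
    rw [hA, cov_sum_left Finset.univ a Y B hY2 hB2]
    have hterm : ∀ j : Fin G, cov μ (Y j) B = a j * Cin := by
      intro j
      rw [hB, cov_sum_right Finset.univ a φ (Y j) hφ2 (hY2 j)]
      rw [Finset.sum_eq_single j]
      · rw [hCin j]
      · intro k _ hk
        rw [htargetlocal j k (fun h => hk h.symm), mul_zero]
      · intro h; exact absurd (Finset.mem_univ j) h
    simp_rw [hterm]
    have : ∀ j : Fin G, a j * (a j * Cin) = (a j) ^ 2 * Cin := by intro j; ring
    simp_rw [this, ← Finset.sum_mul, hsq_a]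
  -- variance of B
  have hvarB : var μ B = (1 - 1 / G) * (Vin - Vout) := by
    show cov μ B B = _
    rw [hB, cov_sum_left Finset.univ a φ B hφ2 hB2]
    have hterm : ∀ j : Fin G, cov μ (φ j) B = a j * (Vin - Vout) := by
      intro j
      rw [hB, cov_sum_right Finset.univ a φ (φ j) hφ2 (hφ2 j)]
      rw [← Finset.add_sum_erase Finset.univ _ (Finset.mem_univ j)]
      have hoff : ∀ k ∈ Finset.univ.erase j, a k * cov μ (φ j) (φ k) = a k * Vout := by
        intro k hk
        rw [hVout j k (fun h => (Finset.mem_erase.mp hk).1 h.symm)]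
      have hvj : cov μ (φ j) (φ j) = Vin := hVin j
      rw [Finset.sum_congr rfl hoff, ← Finset.sum_mul,
        Finset.sum_erase_eq_sub (Finset.mem_univ j), hsum_a, hvj]
      ring
    simp_rw [hterm]
    have : ∀ j : Fin G, a j * (a j * (Vin - Vout)) = (a j) ^ 2 * (Vin - Vout) := by
      intro j; ring
    simp_rw [this, ← Finset.sum_mul, hsq_a]
  -- Cin < 0
  have hCneg : Cin < 0 := by
    have hintφ : Integrable (φ i) μ := int_of_mem2 (hφ2 i)
    have hintY : Integrable (Y i) μ := int_of_mem2 (hY2 i)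
    have hYφ : ∀ ω, Y i ω * φ i ω = -(φ i ω) := by
      intro ω
      rcases hval i ω with h | h
      · rw [h, hφzero i ω h]; ring
      · rw [h]; ring
    have h1 : (∫ ω, Y i ω * φ i ω ∂μ) = -(∫ ω, φ i ω ∂μ) := by
      simp_rw [hYφ]; exact integral_neg _
    have h2 : 0 < ∫ ω, φ i ω ∂μ := by
      have := setIntegral_le_integral (s := {ω | Y i ω = -1}) hintφ
        (ae_of_all _ (fun ω => hφnn i ω))
      linarith [hcond i]
    have h3 : -1 < ∫ ω, Y i ω ∂μ := by
      have hS : MeasurableSet {ω | Y i ω = 1} :=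
        (hYmeas i) (measurableSet_singleton 1)
      have hintf : Integrable (fun ω => 1 + Y i ω) μ := (integrable_const 1).add hintY
      have hfnn : ∀ ω, 0 ≤ 1 + Y i ω := by
        intro ω; rcases hval i ω with h | h <;> rw [h] <;> norm_num
      have hle := setIntegral_le_integral (s := {ω | Y i ω = 1}) hintf
        (ae_of_all _ hfnn)
      have hset : (∫ ω in {ω | Y i ω = 1}, (1 + Y i ω) ∂μ)
          = (μ {ω | Y i ω = 1}).toReal * 2 := by
        rw [setIntegral_congr_fun hS (g := fun _ => (2:ℝ))
          (fun ω hω => by simp only [Set.mem_setOf_eq] at hω; rw [hω]; norm_num)]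
        rw [setIntegral_const]; simp [smul_eq_mul]; rfl
      have htot : (∫ ω, (1 + Y i ω) ∂μ) = 1 + ∫ ω, Y i ω ∂μ := by
        rw [integral_add (integrable_const 1) hintY, integral_const]
        simp
      have h4 : (μ {ω | Y i ω = 1}).toReal * 2 ≤ ∫ ω, (1 + Y i ω) ∂μ := hset ▸ hle
      have h5 := (hp i).1
      linarith
    rw [← hCin i]
    unfold cov
    rw [h1]
    have : -(∫ ω, φ i ω ∂μ) - (∫ ω, Y i ω ∂μ) * (∫ ω, φ i ω ∂μ)
        = -((1 + ∫ ω, Y i ω ∂μ) * (∫ ω, φ i ω ∂μ)) := by ring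
    rw [this]
    have := mul_pos (by linarith : (0:ℝ) < 1 + ∫ ω, Y i ω ∂μ) h2
    linarith
  -- put it together
  set κ : ℝ := 1 - 1 / G with hκ
  have hκpos : 0 < κ := by
    rw [hκ]
    have : 1 / (G:ℝ) < 1 := by
      rw [div_lt_one hGR]
      exact_mod_cast lt_of_lt_of_le one_lt_two hG
    linarith
  set C : ℝ := κ * Cin with hC
  set V : ℝ := κ * (Vin - Vout) with hV
  have hCneg' : C < 0 := mul_neg_of_pos_of_neg hκpos hCneg
  have hVpos : 0 < V := mul_pos hκpos (by linarith)
  refine ⟨-2 * C / V, div_pos (by linarith) hVpos, fun l hl hl2 => ?_⟩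
  have hfun : (fun ω => (Y i ω + l * φ i ω) - (1 / G : ℝ) * ∑ j, (Y j ω + l * φ j ω))
      = fun ω => A ω + l * B ω := by
    funext ω
    have e1 : (fun ω => Y i ω - (1 / G : ℝ) * ∑ j, Y j ω) ω = A ω := by rw [hAeq]
    have e2 : (fun ω => φ i ω - (1 / G : ℝ) * ∑ j, φ j ω) ω = B ω := by rw [hBeq]
    simp only at e1 e2
    rw [← e1, ← e2]
    rw [Finset.sum_add_distrib, ← Finset.mul_sum]
    ring
  rw [hfun, hAeq, var_expand hA2 hB2, hcovAB, hvarB]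
  have hlV : l * V < -2 * C := (lt_div_iff₀ hVpos).mp hl2
  have : 2 * l * C + l ^ 2 * V = l * (2 * C + l * V) := by ring
  nlinarith [mul_pos hl hVpos]
end
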